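/- arXiv:1511.08558 — 2 statements merged into one kernel-verified Lean document; each statement's English description precedes it below -/
import Mathlib

section
/- If G is a finite solvable group and r, s, t are three distinct primes dividing |G|, then at least one of rs, st, rt is the order of some element of G. -/
/-!
Induct on `|G|` through a nontrivial normal abelian subgroup `B` of prime exponent `p`. If
`p ∉ {r, s, t}`, all three primes divide `|G/B|` and element orders lift from `G/B`. If `p = r`,
the same induction for the two primes `s, t` in `G/B` yields an element of order `st`, or an
element `z` of order `t` normalizing a nontrivial subgroup `M` of exponent `s` (or the same with
`s, t` swapped); by Schur–Zassenhaus this configuration lifts from `G/B` to `G`, since `p` does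
not divide `|⟨z⟩M|`. If moreover none of `rs, rt, st` is an element order, then `M⟨z⟩` is a
Frobenius group acting on `B` in which elements of both `M` and `⟨z⟩` act without fixed points;
counting the products `∏ (m y) • b` and `∏ (m y m⁻¹) • b` over `m ∈ M, y ∈ ⟨z⟩` shows
`b ^ |M| = 1`, so `r` divides the `s`-power `|M|`, which is absurd.
-/

open Subgroup

section

variable {G : Type*} [Group G]

theorem eq_of_prime_dvd_card_of_exponent {H : Subgroup G} [Finite H] {p q : ℕ} (hp : p.Prime)
    (hq : q.Prime) (hexp : ∀ x ∈ H, x ^ p = 1) (hdvd : q ∣ Nat.card H) : q = p := by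
  have := Fact.mk hq
  obtain ⟨x, hx⟩ := exists_prime_orderOf_dvd_card' q hdvd
  have : orderOf x ∣ p := orderOf_dvd_of_pow_eq_one (Subtype.ext (by simpa using hexp x x.2))
  exact (Nat.prime_dvd_prime_iff_eq hq hp).mp (hx ▸ this)

theorem prime_dvd_card_quotient_of_exponent [Finite G] {B : Subgroup G} [B.Normal] {p q : ℕ}
    (hp : p.Prime) (hq : q.Prime) (hqp : q ≠ p) (hexp : ∀ x ∈ B, x ^ p = 1)
    (hdvd : q ∣ Nat.card G) : q ∣ Nat.card (G ⧸ B) := by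
  rw [card_eq_card_quotient_mul_card_subgroup B] at hdvd
  exact (hq.dvd_mul.mp hdvd).resolve_right fun h =>
    hqp (eq_of_prime_dvd_card_of_exponent hp hq hexp h)

theorem card_quotient_lt [Finite G] {B : Subgroup G} [B.Normal] (hB : B ≠ ⊥) :
    Nat.card (G ⧸ B) < Nat.card G := by
  rw [card_eq_card_quotient_mul_card_subgroup B]
  exact lt_mul_of_one_lt_right Nat.card_pos ((one_lt_card_iff_ne_bot B).mpr hB)

theorem exists_orderOf_eq_of_surjective {H : Type*} [Group H] [Finite G] (f : G →* H)
    (hf : Function.Surjective f) {n : ℕ} (h : ∃ y : H, orderOf y = n) :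
    ∃ x : G, orderOf x = n := by
  obtain ⟨y, rfl⟩ := h
  obtain ⟨x, rfl⟩ := hf y
  exact ⟨x ^ (orderOf x / orderOf (f x)),
    orderOf_pow_orderOf_div (orderOf_pos x).ne' (orderOf_map_dvd f x)⟩

theorem eq_one_of_commute_of_forall_orderOf_ne {x y : G} {p q : ℕ} (hp : p.Prime)
    (hq : q.Prime) (hpq : p ≠ q) (hx : x ^ p = 1) (hy : orderOf y = q) (hxy : Commute x y)
    (hno : ∀ g : G, orderOf g ≠ p * q) : x = 1 := by
  by_contra hx1
  have := Fact.mk hp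
  have hxp : orderOf x = p := orderOf_eq_prime hx hx1
  have hcop : (orderOf x).Coprime (orderOf y) := by
    rw [hxp, hy]
    exact (Nat.coprime_primes hp hq).mpr hpq
  apply hno (x * y)
  rw [hxy.orderOf_mul_eq_mul_orderOf_of_coprime hcop, hxp, hy]

theorem exists_normal_isMulCommutative_ne_bot [Group.IsSolvable G] [Nontrivial G] :
    ∃ A : Subgroup G, A.Normal ∧ A ≠ ⊥ ∧ IsMulCommutative A := by
  classical
  have hex : ∃ n, derivedSeries G (n + 1) = ⊥ := by
    obtain ⟨n, hn⟩ := Group.IsSolvable.solvable (G := G)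
    exact ⟨n, le_bot_iff.mp ((derivedSeries_antitone G n.le_succ).trans hn.le)⟩
  refine ⟨derivedSeries G (Nat.find hex), derivedSeries_normal G _, ?_, ?_⟩
  · cases h : Nat.find hex with
    | zero => simp
    | succ k => exact Nat.find_min hex (h ▸ k.lt_succ_self)
  · rw [← le_centralizer_iff_isMulCommutative, ← commutator_eq_bot_iff_le_centralizer,
      ← derivedSeries_succ]
    exact Nat.find_spec hex

open scoped IsMulCommutative in
theorem exists_normal_isMulCommutative_prime_exponent [Finite G] [Group.IsSolvable G]
    [Nontrivial G] :
    ∃ (p : ℕ) (B : Subgroup G), p.Prime ∧ B.Normal ∧ B ≠ ⊥ ∧ IsMulCommutative B ∧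
      ∀ x ∈ B, x ^ p = 1 := by
  obtain ⟨A, hAn, hA, hAc⟩ := exists_normal_isMulCommutative_ne_bot (G := G)
  have hcomm {x y : G} (hx : x ∈ A) (hy : y ∈ A) : Commute x y :=
    congrArg Subtype.val (mul_comm (⟨x, hx⟩ : A) ⟨y, hy⟩)
  set p := (Nat.card A).minFac
  have hp : p.Prime := Nat.minFac_prime ((one_lt_card_iff_ne_bot A).mpr hA).ne'
  have := Fact.mk hp
  let B : Subgroup G :=
    { carrier := {x | x ∈ A ∧ x ^ p = 1}
      one_mem' := ⟨A.one_mem, one_pow p⟩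
      mul_mem' := fun ⟨hx, hxp⟩ ⟨hy, hyp⟩ =>
        ⟨A.mul_mem hx hy, by rw [(hcomm hx hy).mul_pow, hxp, hyp, one_mul]⟩
      inv_mem' := fun ⟨hx, hxp⟩ => ⟨A.inv_mem hx, by rw [inv_pow, hxp, inv_one]⟩ }
  refine ⟨p, B, hp, ⟨fun x ⟨hx, hxp⟩ g => ⟨hAn.conj_mem x hx g, ?_⟩⟩, ?_, ?_, fun x hx => hx.2⟩
  · rw [conj_pow, hxp, mul_one, mul_inv_cancel]
  · obtain ⟨a, ha⟩ := exists_prime_orderOf_dvd_card' p (Nat.card A).minFac_dvd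
    refine (ne_bot_iff_exists_ne_one).mpr ⟨⟨a, a.2, ?_⟩, ?_⟩
    · have h := pow_orderOf_eq_one a
      rw [ha] at h
      exact congrArg Subtype.val h
    · intro h1
      have h : a = 1 := Subtype.ext (congrArg (Subtype.val : B → G) h1)
      rw [h, orderOf_one] at ha
      exact hp.ne_one ha.symm
  · exact ⟨⟨fun x y => Subtype.ext (hcomm x.2.1 y.2.1)⟩⟩

theorem card_sup_dvd_of_le_normalizer {H N : Subgroup G} (hHN : H ≤ normalizer (N : Set G)) :
    Nat.card (H ⊔ N : Subgroup G) ∣ Nat.card H * Nat.card N := by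
  have := normal_subgroupOf_of_le_normalizer hHN
  have := normal_subgroupOf_sup_of_le_normalizer hHN
  rw [card_eq_card_quotient_mul_card_subgroup (N.subgroupOf (H ⊔ N)),
    Nat.card_congr (subgroupOfEquivOfLe (le_sup_right : N ≤ H ⊔ N)).toEquiv,
    ← Nat.card_congr (QuotientGroup.quotientInfEquivProdNormalizerQuotient H N hHN).toEquiv]
  exact mul_dvd_mul_right (card_quotient_dvd_card _) _

theorem exists_injective_section_of_coprime {L : Type*} [Group L] (f : G →* L)
    (hf : Function.Surjective f) (hcop : (Nat.card f.ker).Coprime (Nat.card L)) :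
    ∃ g : L →* G, Function.Injective g := by
  rw [← card_top (G := L), ← MonoidHom.range_eq_top_of_surjective f hf, ← index_ker] at hcop
  obtain ⟨H, hH⟩ := exists_right_complement'_of_coprime hcop
  let e : L ≃* H := (QuotientGroup.quotientKerEquivOfSurjective f hf).symm.trans
    hH.symm.QuotientMulEquiv
  exact ⟨H.subtype.comp e.toMonoidHom, H.subtype_injective.comp e.injective⟩

theorem prod_mul_eq_prod_conj {β : Type*} [CommMonoid β] (M : Subgroup G) [Fintype M] {y : G}
    (hy : y ∈ normalizer (M : Set G)) (hfree : ∀ m ∈ M, Commute y m → m = 1) (F : G → β) :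
    ∏ m : M, F (m * y) = ∏ m : M, F (m * y * m⁻¹) := by
  have hmem (m : M) : (m : G) * (y * (m : G)⁻¹ * y⁻¹) ∈ M :=
    M.mul_mem m.2 ((mem_normalizer_iff.mp hy _).mp (M.inv_mem m.2))
  let e : M → M := fun m => ⟨_, hmem m⟩
  have he : Function.Injective e := by
    intro m m' hmm'
    have h : (m : G) * y * (m : G)⁻¹ = m' * y * (m' : G)⁻¹ := by
      simpa [e, mul_assoc] using congrArg (fun g : M => (g : G) * y) hmm'
    have hc : Commute y ((m' : G)⁻¹ * m) := by
      rw [Commute, SemiconjBy]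
      calc y * ((m' : G)⁻¹ * m) = (m' : G)⁻¹ * (m' * y * (m' : G)⁻¹) * m := by group
        _ = (m' : G)⁻¹ * m * y := by rw [← h]; group
    have := hfree _ (M.mul_mem (M.inv_mem m'.2) m.2) hc
    exact Subtype.ext (inv_mul_eq_one.mp this).symm
  symm
  exact Fintype.prod_bijective e (Finite.injective_iff_bijective.mp he) _ _ fun m => by
    simp [e, mul_assoc]

theorem prod_apply_eq_one_of_fixedPointFree {V : Type*} [CommGroup V] (φ : G →* MulAut V)
    (H : Subgroup G) [Fintype H] {h : G} (hh : h ∈ H) (hfree : MonoidHom.FixedPointFree (φ h))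
    (v : V) : ∏ x : H, φ x v = 1 := by
  refine hfree _ ?_
  rw [map_prod]
  exact Fintype.prod_equiv (Equiv.mulLeft ⟨h, hh⟩) _ _ fun x => by simp [MulAut.mul_apply]

theorem pow_card_eq_one_of_fixedPointFree {V : Type*} [CommGroup V] (φ : G →* MulAut V)
    (M Z : Subgroup G) [Finite M] [Finite Z] (hZM : Z ≤ normalizer (M : Set G))
    (hfree : ∀ y ∈ Z, y ≠ 1 → ∀ m ∈ M, Commute y m → m = 1) {m₀ z : G} (hm₀ : m₀ ∈ M)
    (hz : z ∈ Z) (hm₀free : MonoidHom.FixedPointFree (φ m₀))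
    (hzfree : MonoidHom.FixedPointFree (φ z)) (v : V) : v ^ Nat.card M = 1 := by
  -- Both double products below are `1` because `⟨z⟩`-norms vanish; their factors agree for
  -- `y ≠ 1`, while at `y = 1` they are the `M`-norm of `v` (which vanishes) and `v ^ |M|`.
  classical
  have := Fintype.ofFinite M
  have := Fintype.ofFinite Z
  have hZ (w : V) : ∏ y : Z, φ y w = 1 := prod_apply_eq_one_of_fixedPointFree φ Z hz hzfree w
  set a : Z → V := fun y => ∏ m : M, φ (m * y) v
  set c : Z → V := fun y => ∏ m : M, φ (m * y * (m : G)⁻¹) v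
  have ha : ∏ y, a y = 1 := by
    rw [Finset.prod_comm]
    simp only [map_mul, MulAut.mul_apply, ← map_prod, hZ, map_one, Finset.prod_const_one]
  have hc : ∏ y, c y = 1 := by
    rw [Finset.prod_comm]
    simp only [map_mul, MulAut.mul_apply, ← map_prod, hZ, map_one, Finset.prod_const_one]
  have ha₁ : a 1 = 1 := by
    simpa [a] using prod_apply_eq_one_of_fixedPointFree φ M hm₀ hm₀free v
  have hc₁ : c 1 = v ^ Nat.card M := by
    simp [c, Nat.card_eq_fintype_card]
  have hac (y : Z) (hy : y ∈ Finset.univ.erase 1) : a y = c y :=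
    prod_mul_eq_prod_conj M (hZM y.2)
      (hfree y y.2 (by simpa using (Finset.mem_erase.mp hy).1)) fun g => φ g v
  rw [← Finset.mul_prod_erase _ _ (Finset.mem_univ 1), ha₁, one_mul,
    Finset.prod_congr rfl hac] at ha
  rwa [← Finset.mul_prod_erase _ _ (Finset.mem_univ 1), ha, mul_one, hc₁] at hc

end

def HasNormalizedSubgroup (G : Type*) [Group G] (a c : ℕ) : Prop :=
  ∃ (M : Subgroup G) (z : G),
    M ≠ ⊥ ∧ (∀ x ∈ M, x ^ a = 1) ∧ orderOf z = c ∧ z ∈ normalizer (M : Set G)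

namespace HasNormalizedSubgroup

variable {G H : Type*} [Group G] [Group H] {a c : ℕ}

theorem map (h : HasNormalizedSubgroup G a c) (f : G →* H) (hf : Function.Injective f) :
    HasNormalizedSubgroup H a c := by
  obtain ⟨M, z, hM, hMexp, hz, hzM⟩ := h
  refine ⟨M.map f, f z, (map_eq_bot_iff_of_injective M hf).not.mpr hM, ?_, ?_,
    le_normalizer_map f (mem_map_of_mem f hzM)⟩
  · rintro _ ⟨x, hx, rfl⟩
    rw [← map_pow, hMexp x hx, map_one]
  · rwa [orderOf_injective f hf]

theorem of_quotient [Finite G] {B : Subgroup G} [B.Normal] {p : ℕ} (hp : p.Prime) (ha : a.Prime)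
    (hc : c.Prime) (hpa : p ≠ a) (hpc : p ≠ c) (hBexp : ∀ x ∈ B, x ^ p = 1)
    (h : HasNormalizedSubgroup (G ⧸ B) a c) : HasNormalizedSubgroup G a c := by
  obtain ⟨M, z, hM, hMexp, hz, hzM⟩ := h
  have hzM' : zpowers z ≤ normalizer (M : Set (G ⧸ B)) := zpowers_le.mpr hzM
  set L := zpowers z ⊔ M
  have hL : HasNormalizedSubgroup L a c := by
    have := normal_subgroupOf_sup_of_le_normalizer hzM'
    refine ⟨M.subgroupOf L, ⟨z, mem_sup_left (mem_zpowers z)⟩, ?_, ?_, ?_, ?_⟩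
    · rwa [Ne, subgroupOf_eq_bot, disjoint_of_le_iff_left_eq_bot le_sup_right]
    · intro x hx
      exact Subtype.ext (hMexp x hx)
    · rwa [orderOf_mk]
    · rw [normalizer_eq_top]
      exact mem_top _
  have hpL : ¬ p ∣ Nat.card L := by
    intro hdvd
    rcases hp.dvd_mul.mp ((hdvd.trans (card_sup_dvd_of_le_normalizer hzM'))) with h | h
    · rw [Nat.card_zpowers, hz] at h
      exact hpc ((Nat.prime_dvd_prime_iff_eq hp hc).mp h)
    · exact hpa (eq_of_prime_dvd_card_of_exponent ha hp hMexp h)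
  let f := (QuotientGroup.mk' B).subgroupComap L
  have hf : Function.Surjective f :=
    (QuotientGroup.mk' B).subgroupComap_surjective_of_surjective L (QuotientGroup.mk'_surjective B)
  have hker : ∀ x ∈ f.ker, x ^ p = 1 := by
    intro x hx
    have hxB : (x : G) ∈ B :=
      (QuotientGroup.eq_one_iff _).mp (congrArg Subtype.val (f.mem_ker.mp hx))
    exact Subtype.ext (hBexp _ hxB)
  have hcop : (Nat.card f.ker).Coprime (Nat.card L) := Nat.coprime_of_dvd fun q hq hqk hqL =>
    hpL (eq_of_prime_dvd_card_of_exponent hp hq hker hqk ▸ hqL)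
  -- Schur–Zassenhaus in the preimage of `L`, whose kernel `B` has order prime to `|L|`.
  obtain ⟨g, hg⟩ := exists_injective_section_of_coprime f hf hcop
  exact (hL.map g hg).map _ (subtype_injective _)

end HasNormalizedSubgroup

open scoped IsMulCommutative in
theorem exists_orderOf_eq_mul_of_hasNormalizedSubgroup {G : Type*} [Group G] [Finite G]
    {r a c : ℕ} (hr : r.Prime) (ha : a.Prime) (hc : c.Prime) (hra : r ≠ a) (hrc : r ≠ c)
    (hac : a ≠ c) {B : Subgroup G} [B.Normal] [IsMulCommutative B] (hB : B ≠ ⊥)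
    (hBexp : ∀ x ∈ B, x ^ r = 1) (h : HasNormalizedSubgroup G a c) :
    (∃ g : G, orderOf g = r * a) ∨ (∃ g : G, orderOf g = r * c) ∨
      (∃ g : G, orderOf g = a * c) := by
  by_contra! hno
  obtain ⟨hnra, hnrc, hnac⟩ := hno
  obtain ⟨M, z, hM, hMexp, hz, hzM⟩ := h
  have hfree {x : G} {q : ℕ} (hq : q.Prime) (hrq : r ≠ q) (hx : orderOf x = q)
      (hnrq : ∀ g : G, orderOf g ≠ r * q) :
      MonoidHom.FixedPointFree (MulAut.conjNormal x : MulAut B) := by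
    intro v hv
    have hxv : x * v * x⁻¹ = v := by simpa using congrArg Subtype.val hv
    have hvx : Commute (v : G) x := (mul_inv_eq_iff_eq_mul.mp hxv).symm
    exact Subtype.ext (eq_one_of_commute_of_forall_orderOf_ne hr hq hrq (hBexp v v.2) hx hvx hnrq)
  obtain ⟨⟨m₀, hm₀M⟩, hm₀⟩ := M.ne_bot_iff_exists_ne_one.mp hM
  have := Fact.mk ha
  have hm₀a : orderOf m₀ = a := orderOf_eq_prime (hMexp m₀ hm₀M) (by simpa using hm₀)
  have hZ : ∀ y ∈ zpowers z, y ≠ 1 → ∀ m ∈ M, Commute y m → m = 1 := by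
    intro y hy hy1 m hm hym
    have hyc : orderOf y = c := by
      rcases (Nat.dvd_prime hc).mp (hz ▸ orderOf_dvd_of_mem_zpowers hy) with h | h
      · exact absurd (orderOf_eq_one_iff.mp h) hy1
      · exact h
    exact eq_one_of_commute_of_forall_orderOf_ne ha hc hac (hMexp m hm) hyc hym.symm hnac
  obtain ⟨b, hb⟩ := B.ne_bot_iff_exists_ne_one.mp hB
  have hbM : (b : G) ^ Nat.card M = 1 := congrArg Subtype.val
    (pow_card_eq_one_of_fixedPointFree MulAut.conjNormal M (zpowers z) (zpowers_le.mpr hzM) hZ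
      hm₀M (mem_zpowers z) (hfree ha hra hm₀a hnra) (hfree hc hrc hz hnrc) b)
  have := Fact.mk hr
  have hbr : orderOf (b : G) = r := orderOf_eq_prime (hBexp b b.2) (by simpa using hb)
  exact hra (eq_of_prime_dvd_card_of_exponent ha hr hMexp (hbr ▸ orderOf_dvd_of_pow_eq_one hbM))

section

variable {G : Type*} [Group G] [Finite G] [Group.IsSolvable G]

theorem exists_orderOf_eq_mul_or_hasNormalizedSubgroup {s t : ℕ} (hs : s.Prime) (ht : t.Prime)
    (hsd : s ∣ Nat.card G) (htd : t ∣ Nat.card G) :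
    (∃ g : G, orderOf g = s * t) ∨ HasNormalizedSubgroup G s t ∨ HasNormalizedSubgroup G t s := by
  induction hn : Nat.card G using Nat.strong_induction_on generalizing G with
  | _ n ih =>
  have : Nontrivial G := Finite.one_lt_card_iff_nontrivial.mp
    (hs.one_lt.trans_le (Nat.le_of_dvd Nat.card_pos hsd))
  obtain ⟨p, B, hp, hBn, hB, -, hBexp⟩ := exists_normal_isMulCommutative_prime_exponent (G := G)
  have hBz (z : G) : z ∈ normalizer (B : Set G) := normalizer_eq_top (H := B) ▸ mem_top z
  by_cases hps : p = s
  · subst p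
    obtain ⟨z, hz⟩ := exists_prime_orderOf_dvd_card' (hp := ⟨ht⟩) t htd
    exact Or.inr (Or.inl ⟨B, z, hB, hBexp, hz, hBz z⟩)
  by_cases hpt : p = t
  · subst p
    obtain ⟨z, hz⟩ := exists_prime_orderOf_dvd_card' (hp := ⟨hs⟩) s hsd
    exact Or.inr (Or.inr ⟨B, z, hB, hBexp, hz, hBz z⟩)
  rcases ih _ (hn ▸ card_quotient_lt hB)
    (prime_dvd_card_quotient_of_exponent hp hs (Ne.symm hps) hBexp hsd)
    (prime_dvd_card_quotient_of_exponent hp ht (Ne.symm hpt) hBexp htd) rfl with h | h | h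
  · exact Or.inl (exists_orderOf_eq_of_surjective _ (QuotientGroup.mk'_surjective B) h)
  · exact Or.inr (Or.inl (h.of_quotient hp hs ht hps hpt hBexp))
  · exact Or.inr (Or.inr (h.of_quotient hp ht hs hpt hps hBexp))

theorem exists_orderOf_eq_mul_of_normal_exponent {r s t : ℕ} (hr : r.Prime) (hs : s.Prime)
    (ht : t.Prime) (hrs : r ≠ s) (hrt : r ≠ t) (hst : s ≠ t) {B : Subgroup G} [B.Normal]
    [IsMulCommutative B] (hB : B ≠ ⊥) (hBexp : ∀ x ∈ B, x ^ r = 1) (hsd : s ∣ Nat.card G)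
    (htd : t ∣ Nat.card G) :
    (∃ g : G, orderOf g = r * s) ∨ (∃ g : G, orderOf g = r * t) ∨
      (∃ g : G, orderOf g = s * t) := by
  rcases exists_orderOf_eq_mul_or_hasNormalizedSubgroup hs ht
    (prime_dvd_card_quotient_of_exponent hr hs hrs.symm hBexp hsd)
    (prime_dvd_card_quotient_of_exponent hr ht hrt.symm hBexp htd) with h | h | h
  · exact Or.inr (Or.inr (exists_orderOf_eq_of_surjective _ (QuotientGroup.mk'_surjective B) h))
  · exact exists_orderOf_eq_mul_of_hasNormalizedSubgroup hr hs ht hrs hrt hst hB hBexp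
      (h.of_quotient hr hs ht hrs hrt hBexp)
  · have := exists_orderOf_eq_mul_of_hasNormalizedSubgroup hr ht hs hrt hrs hst.symm hB hBexp
      (h.of_quotient hr ht hs hrt hrs hBexp)
    rw [mul_comm t s] at this
    tauto

theorem exists_orderOf_eq_mul_of_three_primes {r s t : ℕ} (hr : r.Prime) (hs : s.Prime)
    (ht : t.Prime) (hrs : r ≠ s) (hst : s ≠ t) (hrt : r ≠ t) (hrd : r ∣ Nat.card G)
    (hsd : s ∣ Nat.card G) (htd : t ∣ Nat.card G) :
    (∃ g : G, orderOf g = r * s) ∨ (∃ g : G, orderOf g = s * t) ∨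
      (∃ g : G, orderOf g = r * t) := by
  induction hn : Nat.card G using Nat.strong_induction_on generalizing G with
  | _ n ih =>
  have : Nontrivial G := Finite.one_lt_card_iff_nontrivial.mp
    (hr.one_lt.trans_le (Nat.le_of_dvd Nat.card_pos hrd))
  obtain ⟨p, B, hp, hBn, hB, hBc, hBexp⟩ := exists_normal_isMulCommutative_prime_exponent (G := G)
  by_cases hpr : p = r
  · subst p
    have := exists_orderOf_eq_mul_of_normal_exponent hr hs ht hrs hrt hst hB hBexp hsd htd
    tauto
  by_cases hps : p = s
  · subst p
    have := exists_orderOf_eq_mul_of_normal_exponent hs hr ht hrs.symm hst hrt hB hBexp hrd htd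
    rw [mul_comm s r] at this
    tauto
  by_cases hpt : p = t
  · subst p
    have := exists_orderOf_eq_mul_of_normal_exponent ht hr hs hrt.symm hst.symm hrs hB hBexp hrd hsd
    rw [mul_comm t r, mul_comm t s] at this
    tauto
  have hlift {m : ℕ} := exists_orderOf_eq_of_surjective (n := m) _ (QuotientGroup.mk'_surjective B)
  exact (ih _ (hn ▸ card_quotient_lt hB)
    (prime_dvd_card_quotient_of_exponent hp hr (Ne.symm hpr) hBexp hrd)
    (prime_dvd_card_quotient_of_exponent hp hs (Ne.symm hps) hBexp hsd)
    (prime_dvd_card_quotient_of_exponent hp ht (Ne.symm hpt) hBexp htd) rfl).imp hlift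
    (Or.imp hlift hlift)

end

/-- If `G` is a finite solvable group and `r`, `s`, `t` are three distinct primes dividing
`|G|`, then at least one of `r*s`, `s*t`, `r*t` is the order of some element of `G`. -/
theorem stmt_1 {G : Type*} [Group G] [Fintype G] (hsolv : IsSolvable G)
    (r s t : ℕ) (hr : r.Prime) (hs : s.Prime) (ht : t.Prime)
    (hrs : r ≠ s) (hst : s ≠ t) (hrt : r ≠ t)
    (hrd : r ∣ Fintype.card G) (hsd : s ∣ Fintype.card G) (htd : t ∣ Fintype.card G) :
    (∃ g : G, orderOf g = r * s) ∨ (∃ g : G, orderOf g = s * t) ∨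
      (∃ g : G, orderOf g = r * t) := by
  have : Group.IsSolvable G := hsolv
  rw [← Nat.card_eq_fintype_card] at hrd hsd htd
  exact exists_orderOf_eq_mul_of_three_primes hr hs ht hrs hst hrt hrd hsd htd
end

section
/- For an odd prime power q = p^n with q ≡ 1 (mod 4), the group PSL(2, q) contains elements of order p, (q-1)/2, and (q+1)/2. -/
/-!
The centre of `SL(2, F)` is `{±1}`, so an element of `SL(2, F)` of odd order keeps its order in
`PSL(2, F)`, and an element of order `2m` whose `m`-th power is `-1` has order `m` there.
The transvection `!![1, 1; 0, 1]` has order `p`. The diagonal torus `a ↦ diag(a, a⁻¹)` embeds the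
cyclic group `Fˣ` of order `q - 1`. Letting the norm-one units of `K = 𝔽_{q²}` act on `K ≅ F²` by
multiplication embeds a cyclic group of order `q + 1`. In both tori the element of order two is
`-1`, which gives the orders `(q ∓ 1) / 2` in `PSL(2, F)`.
-/

open Matrix
open scoped MatrixGroups

namespace QuotientGroup

variable {G : Type*} [Group G] {N : Subgroup G} [N.Normal]

theorem orderOf_dvd_two_mul_orderOf_mk (hN : ∀ x ∈ N, x ^ 2 = 1) (g : G) :
    orderOf g ∣ 2 * orderOf (g : G ⧸ N) := by
  have hmem : g ^ orderOf (g : G ⧸ N) ∈ N := by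
    rw [← eq_one_iff, mk_pow, pow_orderOf_eq_one]
  exact orderOf_dvd_of_pow_eq_one (by rw [pow_mul', hN _ hmem])

theorem orderOf_mk_of_odd (hN : ∀ x ∈ N, x ^ 2 = 1) {g : G} (hg : Odd (orderOf g)) :
    orderOf (g : G ⧸ N) = orderOf g :=
  Nat.dvd_antisymm (orderOf_map_dvd (mk' N) g)
    ((Nat.coprime_two_right.mpr hg).dvd_of_dvd_mul_left
      (orderOf_dvd_two_mul_orderOf_mk hN g))

theorem orderOf_mk_of_pow_mem (hN : ∀ x ∈ N, x ^ 2 = 1) {g : G} {m : ℕ}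
    (hg : orderOf g = 2 * m) (hm : g ^ m ∈ N) : orderOf (g : G ⧸ N) = m :=
  Nat.dvd_antisymm (orderOf_dvd_of_pow_eq_one (by rw [← mk_pow, eq_one_iff]; exact hm))
    (Nat.dvd_of_mul_dvd_mul_left two_pos (hg ▸ orderOf_dvd_two_mul_orderOf_mk hN g))

end QuotientGroup

theorem Units.pow_eq_neg_one_of_orderOf_eq_two_mul {K : Type*} [CommRing K] [IsDomain K]
    {u : Kˣ} {m : ℕ} (hm : m ≠ 0) (hu : orderOf u = 2 * m) : u ^ m = -1 := by
  have hroot : IsPrimitiveRoot ((u : K) ^ m) 2 := by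
    have h := (IsPrimitiveRoot.orderOf (u : K)).pow_of_dvd hm
      (by rw [orderOf_units, hu]; exact Nat.dvd_mul_left m 2)
    rwa [orderOf_units, hu, Nat.mul_div_cancel _ (Nat.pos_of_ne_zero hm)] at h
  exact Units.ext (by simpa using hroot.eq_neg_one_of_two_right)

namespace Matrix.SpecialLinearGroup

section center

variable {F : Type*} [Field F]

theorem sq_eq_one_of_mem_center {x : SL(2, F)} (hx : x ∈ Subgroup.center SL(2, F)) :
    x ^ 2 = 1 := by
  obtain ⟨r, hr, hrx⟩ := mem_center_iff.mp hx
  rw [Fintype.card_fin] at hr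
  ext1
  rw [coe_pow, ← hrx, ← map_pow, hr, map_one, coe_one]

theorem neg_one_mem_center : (-1 : SL(2, F)) ∈ Subgroup.center SL(2, F) :=
  Subgroup.mem_center_iff.mpr fun g ↦ by rw [mul_neg_one, neg_one_mul]

theorem orderOf_coe_psl_of_odd {g : SL(2, F)} (hg : Odd (orderOf g)) :
    orderOf (g : PSL(2, F)) = orderOf g :=
  QuotientGroup.orderOf_mk_of_odd (fun _ ↦ sq_eq_one_of_mem_center) hg

theorem orderOf_coe_psl_of_pow_eq_neg_one {g : SL(2, F)} {m : ℕ} (hg : orderOf g = 2 * m)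
    (hm : g ^ m = -1) : orderOf (g : PSL(2, F)) = m :=
  QuotientGroup.orderOf_mk_of_pow_mem (fun _ ↦ sq_eq_one_of_mem_center) hg
    (hm ▸ neg_one_mem_center)

end center

section transvection

variable {ι F : Type*} [DecidableEq ι] [Fintype ι] [CommRing F] {i j : ι}

def transvectionHom (hij : i ≠ j) : Multiplicative F →* SpecialLinearGroup ι F where
  toFun b := transvection hij b.toAdd
  map_one' := transvection_coeff_zero hij
  map_mul' b c := transvection_add hij b.toAdd c.toAdd

theorem transvectionHom_injective (hij : i ≠ j) :
    Function.Injective (transvectionHom (F := F) hij) :=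
  (injective_iff_map_eq_one _).mpr fun b hb ↦ by
    have hb' : transvection hij b.toAdd = 1 := hb
    exact (transvection_mem_center_iff hij b.toAdd).mp (hb' ▸ Subgroup.one_mem _)

theorem orderOf_transvection (hij : i ≠ j) (b : F) :
    orderOf (transvection hij b) = addOrderOf b :=
  (orderOf_injective (transvectionHom (ι := ι) (F := F) hij) (transvectionHom_injective hij)
    (.ofAdd b)).trans (orderOf_ofAdd_eq_addOrderOf b)

end transvection

section diag2

variable {F : Type*} [Field F]

noncomputable def diag2Hom : Fˣ →* SL(2, F) where
  toFun a := diag2 a a.ne_zero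
  map_one' := by ext i j; fin_cases i <;> fin_cases j <;> simp [diag2_coe']
  map_mul' a b := by ext i j; fin_cases i <;> fin_cases j <;> simp [diag2_coe', mul_comm]

theorem diag2Hom_injective : Function.Injective (diag2Hom (F := F)) := fun a b h ↦
  Units.ext (by simpa [diag2Hom, diag2_coe'] using congr($h 0 0))

theorem diag2Hom_neg_one : diag2Hom (-1 : Fˣ) = -1 := by
  ext i j; fin_cases i <;> fin_cases j <;> simp [diag2Hom, diag2_coe']

end diag2

section normOne

variable {ι F K : Type*} [Fintype ι] [DecidableEq ι] [CommRing F] [CommRing K] [Algebra F K]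

noncomputable def normOneToSL (b : Module.Basis ι F K) :
    (Units.map (Algebra.norm F : K →* F)).ker →* SpecialLinearGroup ι F where
  toFun u := ⟨Algebra.leftMulMatrix b (u : Kˣ), by
    rw [← Algebra.norm_eq_matrix_det]; exact congr(Units.val $(u.2))⟩
  map_one' := Subtype.ext (map_one _)
  map_mul' _ _ := Subtype.ext (map_mul _ _ _)

theorem coe_normOneToSL (b : Module.Basis ι F K) (u : (Units.map (Algebra.norm F : K →* F)).ker) :
    (normOneToSL b u : Matrix ι ι F) = Algebra.leftMulMatrix b (u : Kˣ) :=
  rfl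

theorem normOneToSL_injective (b : Module.Basis ι F K) :
    Function.Injective (normOneToSL b) := fun _ _ h ↦
  Subtype.ext (Units.ext (Algebra.leftMulMatrix_injective b congr(Subtype.val $h)))

theorem normOneToSL_eq_neg_one [Fact (Even (Fintype.card ι))] (b : Module.Basis ι F K)
    {u : (Units.map (Algebra.norm F : K →* F)).ker} (hu : ((u : Kˣ) : K) = -1) :
    normOneToSL b u = -1 :=
  Subtype.ext (by rw [coe_normOneToSL, hu, map_neg, map_one, coe_neg, coe_one])

end normOne

end Matrix.SpecialLinearGroup

theorem FiniteField.exists_norm_eq_one_orderOf (F K : Type*) [Field F] [Fintype F] [Field K]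
    [Fintype K] [Algebra F K] :
    ∃ u : Kˣ, Algebra.norm F (u : K) = 1 ∧
      (Fintype.card F - 1) * orderOf u = Fintype.card K - 1 := by
  classical
  obtain ⟨g, hg⟩ := IsCyclic.exists_generator (α := Kˣ)
  have hord : orderOf g = Fintype.card K - 1 := by
    rw [orderOf_eq_card_of_forall_mem_zpowers hg, Nat.card_eq_fintype_card, Fintype.card_units]
  have hdvd : Fintype.card F - 1 ∣ orderOf g := by
    rw [hord, Module.card_eq_pow_finrank (K := F) (V := K)]
    exact Nat.sub_one_dvd_pow_sub_one _ _
  have hF : Fintype.card F - 1 ≠ 0 := Nat.sub_ne_zero_of_lt Fintype.one_lt_card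
  refine ⟨g ^ (Fintype.card F - 1), ?_, ?_⟩
  · rw [Units.val_pow_eq_pow_val, map_pow]
    exact FiniteField.pow_card_sub_one_eq_one _ (Algebra.norm_ne_zero_iff.mpr g.ne_zero)
  · rw [orderOf_pow_of_dvd hF hdvd, Nat.mul_div_cancel' hdvd, hord]

namespace Matrix.ProjectiveSpecialLinearGroup

variable {F : Type*} [Field F]

theorem exists_orderOf_of_injective {G : Type*} [Group G] {φ : G →* SL(2, F)}
    (hφ : Function.Injective φ) {g : G} {m : ℕ} (hg : orderOf g = 2 * m)
    (hm : φ (g ^ m) = -1) : ∃ x : PSL(2, F), orderOf x = m :=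
  ⟨φ g, SpecialLinearGroup.orderOf_coe_psl_of_pow_eq_neg_one
    ((orderOf_injective φ hφ g).trans hg) (map_pow φ g m ▸ hm)⟩

theorem exists_orderOf_eq_char (p : ℕ) [CharP F p] (hp : Odd p) :
    ∃ x : PSL(2, F), orderOf x = p := by
  let t := SpecialLinearGroup.transvection (zero_ne_one : (0 : Fin 2) ≠ 1) (1 : F)
  have ht : orderOf t = p := by
    rw [SpecialLinearGroup.orderOf_transvection]
    exact CharP.eq F (CharP.addOrderOf_one F) ‹_›
  exact ⟨t, (SpecialLinearGroup.orderOf_coe_psl_of_odd (ht ▸ hp)).trans ht⟩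

variable [Fintype F]

theorem exists_orderOf_eq_card_sub_one_div_two (hF : ringChar F ≠ 2) :
    ∃ x : PSL(2, F), orderOf x = (Fintype.card F - 1) / 2 := by
  classical
  have hodd := FiniteField.odd_card_of_char_ne_two hF
  have hq : 1 < Fintype.card F := Fintype.one_lt_card
  obtain ⟨a, ha⟩ := IsCyclic.exists_generator (α := Fˣ)
  have hord : orderOf a = 2 * ((Fintype.card F - 1) / 2) := by
    rw [orderOf_eq_card_of_forall_mem_zpowers ha, Nat.card_eq_fintype_card, Fintype.card_units]
    omega
  refine exists_orderOf_of_injective SpecialLinearGroup.diag2Hom_injective hord ?_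
  rw [Units.pow_eq_neg_one_of_orderOf_eq_two_mul (by omega) hord,
    SpecialLinearGroup.diag2Hom_neg_one]

theorem exists_orderOf_eq_card_add_one_div_two (hF : ringChar F ≠ 2) :
    ∃ x : PSL(2, F), orderOf x = (Fintype.card F + 1) / 2 := by
  classical
  have := Fact.mk (CharP.char_is_prime F (ringChar F))
  let K := FiniteField.Extension F (ringChar F) 2
  let _ : Fintype K := Fintype.ofFinite K
  have hK : Fintype.card K = Fintype.card F ^ 2 := by
    simpa only [Nat.card_eq_fintype_card] using FiniteField.natCard_extension F (ringChar F) 2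
  let b := Module.finBasisOfFinrankEq F K (FiniteField.finrank_extension F (ringChar F) 2)
  obtain ⟨u, hu, hu_ord⟩ := FiniteField.exists_norm_eq_one_orderOf F K
  have hodd := FiniteField.odd_card_of_char_ne_two hF
  have hq : 1 < Fintype.card F := Fintype.one_lt_card
  have hu_ord' : orderOf u = 2 * ((Fintype.card F + 1) / 2) := by
    rw [hK, show Fintype.card F ^ 2 - 1 = (Fintype.card F - 1) * (Fintype.card F + 1) by
      simpa [mul_comm] using Nat.sq_sub_sq (Fintype.card F) 1] at hu_ord
    rw [Nat.eq_of_mul_eq_mul_left (by omega) hu_ord]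
    omega
  refine exists_orderOf_of_injective (SpecialLinearGroup.normOneToSL_injective b)
    ((Subgroup.orderOf_mk u (MonoidHom.mem_ker.mpr (Units.ext hu))).trans hu_ord') ?_
  refine SpecialLinearGroup.normOneToSL_eq_neg_one b ?_
  rw [Subgroup.coe_pow, Units.pow_eq_neg_one_of_orderOf_eq_two_mul (by omega) hu_ord']
  rfl

end Matrix.ProjectiveSpecialLinearGroup

theorem stmt_19_general (p n q : ℕ) (hp : p.Prime) (hodd : p ≠ 2) (hq : q = p ^ n)
    (F : Type*) [Field F] [Fintype F] (hF : Fintype.card F = q) :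
    (∃ g : PSL(2, F), orderOf g = p) ∧
      (∃ g : PSL(2, F), orderOf g = (q - 1) / 2) ∧
        ∃ g : PSL(2, F), orderOf g = (q + 1) / 2 := by
  have := Fact.mk hp
  have : CharP F p := charP_of_card_eq_prime_pow (hF.trans hq)
  have hF2 : ringChar F ≠ 2 := ringChar.eq F p ▸ hodd
  subst hF
  exact ⟨ProjectiveSpecialLinearGroup.exists_orderOf_eq_char p (hp.odd_of_ne_two hodd),
    ProjectiveSpecialLinearGroup.exists_orderOf_eq_card_sub_one_div_two hF2,
    ProjectiveSpecialLinearGroup.exists_orderOf_eq_card_add_one_div_two hF2⟩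

/-- For an odd prime power `q = p^n` with `q ≡ 1 (mod 4)`, the projective special linear
group `PSL(2, q)` contains elements of order `p`, `(q-1)/2`, and `(q+1)/2`. -/
theorem stmt_19 (p n q : ℕ) (hp : p.Prime) (hodd : p ≠ 2) (hq : q = p ^ n)
    (hq4 : q % 4 = 1) (F : Type*) [Field F] [Fintype F] (hF : Fintype.card F = q) :
    (∃ g : PSL(2, F), orderOf g = p) ∧
      (∃ g : PSL(2, F), orderOf g = (q - 1) / 2) ∧
        ∃ g : PSL(2, F), orderOf g = (q + 1) / 2 :=
  stmt_19_general p n q hp hodd hq F hF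
end
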